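/- arXiv:2202.00148 — 5 statements merged into one kernel-verified Lean document; each statement's English description precedes it below -/
import Mathlib

section
/- Let f be a continuous 2π-periodic real-valued function with modulus of continuity ω, let β ≥ 0, and let A = (a_{n,k}) be a lower triangular infinite matrix of real numbers satisfying: (i) a_{n,k} ≥ 0 and Σ_{k=0}^{n} a_{n,k} = 1 for every n; (ii) there is a constant C, independent of n and m, such that Σ_{k=0}^{m-1} (k+1)^β |a_{n,k}/(k+1)^β − a_{n,k+1}/(k+2)^β| ≤ C·a_{n,m} for all 0 ≤ m ≤ n. Suppose H : (0,π] → [0,∞) is such that ∫_u^π t^{-2} ω(t) dt = O(H(u)) as u → 0+. Then ‖T_{n,A}(f) − f‖_∞ = O(ω(π/(n+1)) + a_{n,n}·H(π/(n+1))), with the implied constant independent of n. -/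
/-!
With `φₓ(t) = f(x+t) + f(x-t) - 2 f(x)` and `Kₙ = ∑ₖ a_{n,k} D_k` (`D_k` the Dirichlet kernel),
`T_{n,A} f x - f x = π⁻¹ ∫₀^π φₓ Kₙ`. Split at `u = π/(n+1)`. On `[0, u]` use `|φₓ| ≤ 2ω(u)` and
`|Kₙ| ≤ n + 1`. On `[u, π]` use `2 sin(t/2) D_k(t) = sin((k+1/2)t)` and sum by parts twice: first
against the weights `(k+1)^β`, the partial sums of `sin((k+1/2)t)` being bounded by `1/sin(t/2)`,
then against `a_{n,k}/(k+1)^β`. Condition (ii) with `m = n` and Jordan's inequality give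
`|Kₙ(t)| ≤ (1 + C) a_{n,n} π²/t²`, and integrating against `|φₓ(t)| ≤ 2ω(t)` gives the `H` term.
-/

open Real MeasureTheory

/-- The `k`-th partial sum of the (trigonometric) Fourier series of `f` at `x`. -/
noncomputable def fourierPartialSum (f : ℝ → ℝ) (k : ℕ) (x : ℝ) : ℝ :=
  (1 / (2 * Real.pi)) * (∫ t in (-Real.pi)..Real.pi, f t) +
    ∑ j ∈ Finset.Icc 1 k,
      ((1 / Real.pi) * (∫ t in (-Real.pi)..Real.pi, f t * Real.cos (j * t)) * Real.cos (j * x) +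
        (1 / Real.pi) * (∫ t in (-Real.pi)..Real.pi, f t * Real.sin (j * t)) * Real.sin (j * x))

/-- The `A`-transform `T_{n,A}(f;x) = ∑_{k=0}^n a_{n,k} S_k(f;x)`. -/
noncomputable def matrixTransform (a : ℕ → ℕ → ℝ) (f : ℝ → ℝ) (n : ℕ) (x : ℝ) : ℝ :=
  ∑ k ∈ Finset.range (n + 1), a n k * fourierPartialSum f k x

/-- The modulus of continuity `ω(δ,f)`. -/
noncomputable def modulusOfContinuity (f : ℝ → ℝ) (δ : ℝ) : ℝ :=
  sSup {y : ℝ | ∃ x t : ℝ, |t| ≤ δ ∧ y = |f (x + t) - f x|}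

open Finset Bornology

-- Normalised so that `S_k f x = π⁻¹ ∫_{-π}^{π} f (x + t) D_k t dt`.
noncomputable def dirichletKernel (k : ℕ) (t : ℝ) : ℝ :=
  1 / 2 + ∑ j ∈ Icc 1 k, cos (j * t)

namespace dirichletKernel

@[fun_prop]
theorem continuous (k : ℕ) : Continuous (dirichletKernel k) := by
  unfold dirichletKernel; fun_prop

theorem neg (k : ℕ) (t : ℝ) : dirichletKernel k (-t) = dirichletKernel k t := by
  simp only [dirichletKernel, mul_neg, cos_neg]

theorem periodic (k : ℕ) : Function.Periodic (dirichletKernel k) (2 * π) := by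
  intro t
  simp only [dirichletKernel, mul_add, cos_add_nat_mul_two_pi]

theorem abs_le (k : ℕ) (t : ℝ) : |dirichletKernel k t| ≤ k + 1 := by
  calc |dirichletKernel k t| ≤ |1 / 2| + ∑ j ∈ Icc 1 k, |cos (j * t)| :=
        (abs_add_le _ _).trans (add_le_add le_rfl (abs_sum_le_sum_abs _ _))
    _ ≤ 1 + ∑ _j ∈ Icc 1 k, 1 := by
        gcongr with j
        · norm_num
        · exact abs_cos_le_one _
    _ = k + 1 := by simp [add_comm]

theorem two_sin_half_mul (k : ℕ) (t : ℝ) :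
    2 * sin (t / 2) * dirichletKernel k t = sin ((k + 1 / 2) * t) := by
  induction k with
  | zero =>
    simp only [dirichletKernel, Icc_eq_empty_of_lt zero_lt_one, sum_empty, add_zero,
      CharP.cast_eq_zero, zero_add]
    ring_nf
  | succ k ih =>
    rw [dirichletKernel, sum_Icc_succ_top (by omega), ← add_assoc, mul_add, ← dirichletKernel, ih]
    have := sin_add ((k + 1) * t) (t / 2)
    have := sin_sub ((k + 1) * t) (t / 2)
    push_cast
    rw [show ((k : ℝ) + 1 + 1 / 2) * t = (k + 1) * t + t / 2 by ring,
      show ((k : ℝ) + 1 / 2) * t = (k + 1) * t - t / 2 by ring]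
    linarith

theorem integral_zero_pi (k : ℕ) : ∫ t in 0..π, dirichletKernel k t = π / 2 := by
  have hcos : ∀ j ∈ Icc 1 k, ∫ t in 0..π, cos ((j : ℝ) * t) = 0 := by
    intro j hj
    have hj : (j : ℝ) ≠ 0 := by have := (mem_Icc.mp hj).1; positivity
    simp [intervalIntegral.integral_comp_mul_left (fun t => cos t) hj, sin_nat_mul_pi]
  simp only [dirichletKernel]
  rw [intervalIntegral.integral_add intervalIntegrable_const
      (Continuous.intervalIntegrable (by fun_prop) _ _),
    intervalIntegral.integral_finsetSum fun j _ => Continuous.intervalIntegrable (by fun_prop) _ _,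
    sum_eq_zero hcos]
  simp only [intervalIntegral.integral_const, sub_zero, smul_eq_mul, add_zero]
  ring

end dirichletKernel

theorem two_sin_half_mul_sum_range_sin (m : ℕ) (t : ℝ) :
    2 * sin (t / 2) * ∑ j ∈ range m, sin ((j + 1 / 2) * t) = 1 - cos (m * t) := by
  have htelescope : ∀ j : ℕ,
      2 * sin (t / 2) * sin ((j + 1 / 2) * t) = cos (j * t) - cos ((j + 1) * t) := by
    intro j
    have := cos_sub ((j + 1 / 2) * t) (t / 2)
    have := cos_add ((j + 1 / 2) * t) (t / 2)
    rw [show (j : ℝ) * t = (j + 1 / 2) * t - t / 2 by ring,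
      show ((j : ℝ) + 1) * t = (j + 1 / 2) * t + t / 2 by ring]
    linarith
  rw [mul_sum, sum_congr rfl fun j _ => htelescope j]
  have := sum_range_sub' (fun j : ℕ => cos (j * t)) m
  push_cast at this
  simpa using this

section ModulusOfContinuity

variable {f : ℝ → ℝ}

theorem bddAbove_modulusOfContinuity_set (hf : IsBounded (Set.range f)) (δ : ℝ) :
    BddAbove {y : ℝ | ∃ x t : ℝ, |t| ≤ δ ∧ y = |f (x + t) - f x|} := by
  obtain ⟨B, hB⟩ := isBounded_iff_forall_norm_le.mp hf
  refine ⟨B + B, ?_⟩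
  rintro _ ⟨x, t, -, rfl⟩
  exact (abs_sub _ _).trans (add_le_add (hB _ ⟨_, rfl⟩) (hB _ ⟨_, rfl⟩))

theorem abs_sub_le_modulusOfContinuity (hf : IsBounded (Set.range f)) (x : ℝ) {t δ : ℝ}
    (ht : |t| ≤ δ) : |f (x + t) - f x| ≤ modulusOfContinuity f δ :=
  le_csSup (bddAbove_modulusOfContinuity_set hf δ) ⟨x, t, ht, rfl⟩

theorem modulusOfContinuity_nonneg (hf : IsBounded (Set.range f)) {δ : ℝ} (hδ : 0 ≤ δ) :
    0 ≤ modulusOfContinuity f δ :=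
  (abs_nonneg _).trans (abs_sub_le_modulusOfContinuity hf 0 (t := 0) (by simpa using hδ))

theorem monotoneOn_modulusOfContinuity (hf : IsBounded (Set.range f)) :
    MonotoneOn (modulusOfContinuity f) (Set.Ici 0) := by
  intro δ₁ hδ₁ δ₂ _ h
  refine csSup_le_csSup (bddAbove_modulusOfContinuity_set hf δ₂)
    ⟨_, 0, 0, by simpa using hδ₁, rfl⟩ ?_
  rintro _ ⟨x, t, ht, rfl⟩
  exact ⟨x, t, ht.trans h, rfl⟩

theorem abs_add_sub_two_mul_le_modulusOfContinuity (hf : IsBounded (Set.range f)) (x : ℝ)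
    {t δ : ℝ} (ht : |t| ≤ δ) :
    |f (x + t) + f (x - t) - 2 * f x| ≤ 2 * modulusOfContinuity f δ := by
  have h₁ := abs_sub_le_modulusOfContinuity hf x ht
  have h₂ := abs_sub_le_modulusOfContinuity hf x (t := -t) (δ := δ) (by rwa [abs_neg])
  rw [← sub_eq_add_neg] at h₂
  calc |f (x + t) + f (x - t) - 2 * f x| = |(f (x + t) - f x) + (f (x - t) - f x)| := by ring_nf
    _ ≤ 2 * modulusOfContinuity f δ := (abs_add_le _ _).trans (by linarith)

end ModulusOfContinuity

theorem abs_sum_range_succ_mul_le (b g c : ℕ → ℝ) (n : ℕ)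
    (hc : ∀ i ≤ n, |∑ j ∈ range (i + 1), g j| ≤ c i) :
    |∑ k ∈ range (n + 1), b k * g k|
      ≤ |b n| * c n + ∑ i ∈ range n, |b (i + 1) - b i| * c i := by
  have hparts := sum_range_by_parts b g (n + 1)
  simp only [smul_eq_mul, Nat.add_sub_cancel] at hparts
  rw [hparts]
  refine (abs_sub _ _).trans (add_le_add ?_ ((abs_sum_le_sum_abs _ _).trans ?_))
  · rw [abs_mul]; gcongr; exact hc n le_rfl
  · refine sum_le_sum fun i hi => ?_
    rw [abs_mul]; gcongr; exact hc i (mem_range.mp hi).le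

-- The left-hand side of the paper's condition (ii) for the row `a = a_{n,·}`.
noncomputable def weightedVariation (β : ℝ) (a : ℕ → ℝ) (m : ℕ) : ℝ :=
  ∑ k ∈ range m, ((k : ℝ) + 1) ^ β * |a k / ((k : ℝ) + 1) ^ β - a (k + 1) / ((k : ℝ) + 2) ^ β|

theorem weightedVariation_nonneg (β : ℝ) (a : ℕ → ℝ) (m : ℕ) : 0 ≤ weightedVariation β a m := by
  unfold weightedVariation; positivity

section SineSums

variable {t : ℝ}

theorem abs_sum_range_sin_half_le (ht : 0 < sin (t / 2)) (m : ℕ) :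
    |∑ j ∈ range m, sin ((j + 1 / 2) * t)| ≤ 1 / sin (t / 2) := by
  have h := two_sin_half_mul_sum_range_sin m t
  have hcos := neg_one_le_cos (m * t)
  have hcos' := cos_le_one (m * t)
  rw [abs_le, le_div_iff₀ ht]
  constructor
  · have : 0 ≤ ∑ j ∈ range m, sin ((j + 1 / 2) * t) := by nlinarith
    exact le_trans (by rw [neg_nonpos]; positivity) this
  · nlinarith

theorem abs_sum_range_rpow_mul_sin_half_le {β : ℝ} (hβ : 0 ≤ β) (ht : 0 < sin (t / 2)) (m : ℕ) :
    |∑ j ∈ range (m + 1), ((j : ℝ) + 1) ^ β * sin ((j + 1 / 2) * t)|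
      ≤ 2 * ((m : ℝ) + 1) ^ β / sin (t / 2) := by
  set w : ℕ → ℝ := fun j => ((j : ℝ) + 1) ^ β
  have hw : Monotone w := fun i j hij => by
    dsimp only [w]; gcongr
  have habel := abs_sum_range_succ_mul_le w (fun j => sin ((j + 1 / 2) * t))
    (fun _ => 1 / sin (t / 2)) m fun i _ => abs_sum_range_sin_half_le ht (i + 1)
  have htel : ∑ i ∈ range m, |w (i + 1) - w i| = w m - w 0 := by
    rw [← sum_range_sub w m]
    exact sum_congr rfl fun i _ => abs_of_nonneg (sub_nonneg.mpr (hw (Nat.le_succ i)))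
  rw [← sum_mul, htel, abs_of_nonneg (by positivity : 0 ≤ w m)] at habel
  refine habel.trans ?_
  have : 0 ≤ w 0 := by positivity
  rw [← add_mul, mul_one_div]
  gcongr
  linarith

theorem abs_sum_range_mul_sin_half_le {β : ℝ} (hβ : 0 ≤ β) (ht : 0 < sin (t / 2))
    (a : ℕ → ℝ) (n : ℕ) :
    |∑ k ∈ range (n + 1), a k * sin ((k + 1 / 2) * t)|
      ≤ 2 * (|a n| + weightedVariation β a n) / sin (t / 2) := by
  set w : ℕ → ℝ := fun j => ((j : ℝ) + 1) ^ β
  have hw : ∀ j, 0 < w j := fun j => by positivity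
  have habel := abs_sum_range_succ_mul_le (fun k => a k / w k)
    (fun k => w k * sin ((k + 1 / 2) * t))
    (fun i => 2 * w i / sin (t / 2)) n fun i _ => abs_sum_range_rpow_mul_sin_half_le hβ ht i
  have hcancel : ∀ k, a k / w k * (w k * sin ((k + 1 / 2) * t)) = a k * sin ((k + 1 / 2) * t) :=
    fun k => by field_simp [(hw k).ne']
  simp only [hcancel] at habel
  refine habel.trans (le_of_eq ?_)
  rw [weightedVariation, abs_div, abs_of_pos (hw n), mul_add, add_div, mul_sum, sum_div]
  congr 1
  · field_simp [(hw n).ne']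
  · refine sum_congr rfl fun i _ => ?_
    have : w (i + 1) = ((i : ℝ) + 2) ^ β := by push_cast [w]; ring_nf
    rw [this, abs_sub_comm]
    ring

end SineSums

theorem abs_sum_mul_dirichletKernel_le {β : ℝ} (hβ : 0 ≤ β) (a : ℕ → ℝ) (n : ℕ) {t : ℝ}
    (ht₀ : 0 < t) (htπ : t ≤ π) :
    |∑ k ∈ range (n + 1), a k * dirichletKernel k t|
      ≤ (|a n| + weightedVariation β a n) * π ^ 2 / t ^ 2 := by
  have hjordan : t / π ≤ sin (t / 2) :=
    calc t / π = 2 / π * (t / 2) := by ring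
      _ ≤ sin (t / 2) := mul_le_sin (by positivity) (by linarith)
  have hs : 0 < sin (t / 2) := lt_of_lt_of_le (by positivity) hjordan
  have hsin : 2 * sin (t / 2) * ∑ k ∈ range (n + 1), a k * dirichletKernel k t
      = ∑ k ∈ range (n + 1), a k * sin ((k + 1 / 2) * t) := by
    rw [mul_sum]
    exact sum_congr rfl fun k _ => by rw [← dirichletKernel.two_sin_half_mul]; ring
  have hbound := abs_sum_range_mul_sin_half_le hβ hs a n
  rw [← hsin, abs_mul, abs_of_pos (by positivity), le_div_iff₀ hs] at hbound
  have hV := weightedVariation_nonneg β a n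
  calc |∑ k ∈ range (n + 1), a k * dirichletKernel k t|
      ≤ (|a n| + weightedVariation β a n) / sin (t / 2) ^ 2 := by
        rw [le_div_iff₀ (by positivity)]; nlinarith
    _ ≤ (|a n| + weightedVariation β a n) / (t / π) ^ 2 := by gcongr
    _ = (|a n| + weightedVariation β a n) * π ^ 2 / t ^ 2 := by field_simp

theorem abs_sum_mul_dirichletKernel_le_mul_sum_abs (a : ℕ → ℝ) (n : ℕ) (t : ℝ) :
    |∑ k ∈ range (n + 1), a k * dirichletKernel k t|
      ≤ (n + 1) * ∑ k ∈ range (n + 1), |a k| := by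
  rw [mul_sum]
  refine (abs_sum_le_sum_abs _ _).trans (sum_le_sum fun k hk => ?_)
  rw [abs_mul, mul_comm]
  gcongr
  refine (dirichletKernel.abs_le k t).trans ?_
  gcongr
  exact Nat.lt_succ_iff.mp (mem_range.mp hk)

theorem Function.Periodic.intervalIntegral_comp_sub_right {E : Type*} [NormedAddCommGroup E]
    [NormedSpace ℝ E] {g : ℝ → E} {T : ℝ} (hg : Function.Periodic g T) (a x : ℝ) :
    ∫ t in a..a + T, g (t - x) = ∫ t in a..a + T, g t := by
  rw [intervalIntegral.integral_comp_sub_right, add_sub_right_comm, hg.intervalIntegral_add_eq]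

theorem intervalIntegral.integral_neg_to_eq_integral_add_comp_neg {E : Type*}
    [NormedAddCommGroup E] [NormedSpace ℝ E] {F : ℝ → E} (hF : Continuous F) (a : ℝ) :
    ∫ t in -a..a, F t = ∫ t in 0..a, (F t + F (-t)) := by
  rw [← integral_add_adjacent_intervals (b := 0) (hF.intervalIntegrable _ _)
      (hF.intervalIntegrable _ _),
    integral_add (hF.intervalIntegrable _ _)
      ((by fun_prop : Continuous fun t => F (-t)).intervalIntegrable _ _),
    integral_comp_neg (fun t => F t), neg_zero, add_comm]

section FourierPartialSum

variable {f : ℝ → ℝ}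

theorem fourierPartialSum_eq_integral_mul_dirichletKernel_sub (hf : Continuous f) (k : ℕ)
    (x : ℝ) :
    fourierPartialSum f k x = 1 / π * ∫ t in -π..π, f t * dirichletKernel k (t - x) := by
  have hint : ∀ g : ℝ → ℝ, Continuous g → IntervalIntegrable g volume (-π) π :=
    fun g hg => hg.intervalIntegrable _ _
  have hexpand : ∀ t, f t * dirichletKernel k (t - x) = f t * (1 / 2) +
      ∑ j ∈ Icc 1 k, (f t * cos (j * t) * cos (j * x) + f t * sin (j * t) * sin (j * x)) := by
    intro t
    simp only [dirichletKernel, mul_add, mul_sum, mul_sub, cos_sub]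
    congr 1
    exact sum_congr rfl fun j _ => by ring
  have hterm : ∀ j : ℕ,
      ∫ t in -π..π, (f t * cos (j * t) * cos (j * x) + f t * sin (j * t) * sin (j * x))
        = (∫ t in -π..π, f t * cos (j * t)) * cos (j * x)
          + (∫ t in -π..π, f t * sin (j * t)) * sin (j * x) := by
    intro j
    rw [intervalIntegral.integral_add (hint _ (by fun_prop)) (hint _ (by fun_prop)),
      intervalIntegral.integral_mul_const, intervalIntegral.integral_mul_const]
  simp_rw [hexpand]
  rw [intervalIntegral.integral_add (hint _ (by fun_prop)) (hint _ (by fun_prop)),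
    intervalIntegral.integral_finsetSum fun j _ => hint _ (by fun_prop)]
  simp only [hterm, intervalIntegral.integral_mul_const, fourierPartialSum, mul_add, mul_sum]
  congr 1
  · ring
  · exact sum_congr rfl fun j _ => by ring

theorem fourierPartialSum_eq_integral_comp_add_mul_dirichletKernel (hf : Continuous f)
    (hper : Function.Periodic f (2 * π)) (k : ℕ) (x : ℝ) :
    fourierPartialSum f k x = 1 / π * ∫ t in -π..π, f (x + t) * dirichletKernel k t := by
  have hg : Function.Periodic (fun t => f (x + t) * dirichletKernel k t) (2 * π) := fun t => by
    simp only [← add_assoc, hper _, dirichletKernel.periodic k t]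
  have hshift := hg.intervalIntegral_comp_sub_right (-π) x
  simp only [add_sub_cancel, show -π + 2 * π = π by ring] at hshift
  rw [fourierPartialSum_eq_integral_mul_dirichletKernel_sub hf, hshift]

theorem fourierPartialSum_sub_eq_integral (hf : Continuous f)
    (hper : Function.Periodic f (2 * π)) (k : ℕ) (x : ℝ) :
    fourierPartialSum f k x - f x
      = 1 / π * ∫ t in 0..π, (f (x + t) + f (x - t) - 2 * f x) * dirichletKernel k t := by
  have hint : ∀ g : ℝ → ℝ, Continuous g → IntervalIntegrable g volume 0 π :=
    fun g hg => hg.intervalIntegrable _ _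
  calc fourierPartialSum f k x - f x
      = (1 / π * ∫ t in 0..π, (f (x + t) * dirichletKernel k t
          + f (x + -t) * dirichletKernel k (-t)))
        - 1 / π * ∫ t in 0..π, 2 * f x * dirichletKernel k t := by
        rw [fourierPartialSum_eq_integral_comp_add_mul_dirichletKernel hf hper,
          intervalIntegral.integral_neg_to_eq_integral_add_comp_neg (by fun_prop),
          intervalIntegral.integral_const_mul, dirichletKernel.integral_zero_pi]
        field_simp
    _ = 1 / π * ∫ t in 0..π, (f (x + t) + f (x - t) - 2 * f x) * dirichletKernel k t := by
        rw [← mul_sub,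
          ← intervalIntegral.integral_sub (hint _ (by fun_prop)) (hint _ (by fun_prop))]
        congr 2 with t
        rw [dirichletKernel.neg, ← sub_eq_add_neg]
        ring

theorem matrixTransform_sub_eq_integral (hf : Continuous f) (hper : Function.Periodic f (2 * π))
    (a : ℕ → ℕ → ℝ) (n : ℕ) (hrow : ∑ k ∈ range (n + 1), a n k = 1) (x : ℝ) :
    matrixTransform a f n x - f x = 1 / π * ∫ t in 0..π,
      (f (x + t) + f (x - t) - 2 * f x) * ∑ k ∈ range (n + 1), a n k * dirichletKernel k t := by
  have hsum : matrixTransform a f n x - f x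
      = ∑ k ∈ range (n + 1), a n k * (fourierPartialSum f k x - f x) := by
    simp only [matrixTransform, mul_sub, sum_sub_distrib, ← sum_mul, hrow, one_mul]
  simp_rw [hsum, mul_sum]
  rw [intervalIntegral.integral_finsetSum fun k _ =>
    Continuous.intervalIntegrable (by fun_prop) _ _, mul_sum]
  refine sum_congr rfl fun k _ => ?_
  simp_rw [fourierPartialSum_sub_eq_integral hf hper, mul_left_comm _ (a n k),
    intervalIntegral.integral_const_mul]
  ring

theorem intervalIntegrable_modulusOfContinuity_div_sq {f : ℝ → ℝ} (hf : IsBounded (Set.range f))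
    {u v : ℝ} (hu : 0 < u) (huv : u ≤ v) :
    IntervalIntegrable (fun t => modulusOfContinuity f t / t ^ 2) volume u v := by
  have hsub : Set.uIcc u v ⊆ Set.Ici 0 := fun t ht => by
    rw [Set.uIcc_of_le huv] at ht; exact hu.le.trans ht.1
  simp_rw [div_eq_mul_inv]
  refine (((monotoneOn_modulusOfContinuity hf).mono hsub).intervalIntegrable).mul_continuousOn ?_
  refine ContinuousOn.inv₀ (by fun_prop) fun t ht => ?_
  rw [Set.uIcc_of_le huv] at ht
  exact pow_ne_zero 2 (hu.trans_le ht.1).ne'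

section KernelIntegrals

variable {f : ℝ → ℝ} (hf : IsBounded (Set.range f)) (x : ℝ) (a : ℕ → ℝ) (n : ℕ)
include hf

theorem abs_integral_zero_to_mul_sum_dirichletKernel_le {u : ℝ} (hu : 0 ≤ u) :
    |∫ t in 0..u,
        (f (x + t) + f (x - t) - 2 * f x) * ∑ k ∈ range (n + 1), a k * dirichletKernel k t|
      ≤ 2 * modulusOfContinuity f u * ((n + 1) * ∑ k ∈ range (n + 1), |a k|) * u := by
  have hb : ∀ t ∈ Set.uIoc 0 u, ‖(f (x + t) + f (x - t) - 2 * f x)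
      * ∑ k ∈ range (n + 1), a k * dirichletKernel k t‖
        ≤ 2 * modulusOfContinuity f u * ((n + 1) * ∑ k ∈ range (n + 1), |a k|) := by
    rintro t ⟨ht₀, htu⟩
    rw [min_eq_left hu] at ht₀
    rw [max_eq_right hu] at htu
    rw [Real.norm_eq_abs, abs_mul]
    exact mul_le_mul
      (abs_add_sub_two_mul_le_modulusOfContinuity hf x ((abs_of_pos ht₀).trans_le htu))
      (abs_sum_mul_dirichletKernel_le_mul_sum_abs a n t) (abs_nonneg _)
      (mul_nonneg zero_le_two (modulusOfContinuity_nonneg hf hu))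
  refine (intervalIntegral.norm_integral_le_of_norm_le_const hb).trans_eq ?_
  rw [sub_zero, abs_of_nonneg hu]

theorem abs_integral_to_pi_mul_sum_dirichletKernel_le {β : ℝ} (hβ : 0 ≤ β) {u : ℝ} (hu : 0 < u)
    (huπ : u ≤ π) :
    |∫ t in u..π,
        (f (x + t) + f (x - t) - 2 * f x) * ∑ k ∈ range (n + 1), a k * dirichletKernel k t|
      ≤ 2 * π ^ 2 * (|a n| + weightedVariation β a n)
          * ∫ t in u..π, modulusOfContinuity f t / t ^ 2 := by
  rw [← intervalIntegral.integral_const_mul]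
  refine (intervalIntegral.abs_integral_le_integral_abs huπ).trans ?_
  rw [intervalIntegral.integral_of_le huπ, intervalIntegral.integral_of_le huπ]
  refine integral_mono_of_nonneg (.of_forall fun t => abs_nonneg _)
    ((intervalIntegrable_modulusOfContinuity_div_sq hf hu huπ).const_mul _).1
    ((ae_restrict_mem measurableSet_Ioc).mono ?_)
  rintro t ⟨hut, htπ⟩
  have ht₀ := hu.trans hut
  dsimp only
  rw [abs_mul]
  calc _ ≤ 2 * modulusOfContinuity f t * ((|a n| + weightedVariation β a n) * π ^ 2 / t ^ 2) :=
        mul_le_mul (abs_add_sub_two_mul_le_modulusOfContinuity hf x (abs_of_pos ht₀).le)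
          (abs_sum_mul_dirichletKernel_le hβ a n ht₀ htπ) (abs_nonneg _)
          (mul_nonneg zero_le_two (modulusOfContinuity_nonneg hf ht₀.le))
    _ = 2 * π ^ 2 * (|a n| + weightedVariation β a n) * (modulusOfContinuity f t / t ^ 2) := by
        ring

end KernelIntegrals

theorem abs_matrixTransform_sub_le {f : ℝ → ℝ} (hf : Continuous f)
    (hper : Function.Periodic f (2 * π)) {β : ℝ} (hβ : 0 ≤ β) (a : ℕ → ℕ → ℝ) (n : ℕ)
    (hnn : ∀ k, 0 ≤ a n k) (hrow : ∑ k ∈ range (n + 1), a n k = 1) (x : ℝ) :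
    |matrixTransform a f n x - f x|
      ≤ 2 * modulusOfContinuity f (π / (n + 1)) + 2 * π * (a n n + weightedVariation β (a n) n)
          * ∫ t in π / (n + 1)..π, modulusOfContinuity f t / t ^ 2 := by
  have hbdd := hper.isBounded_of_continuous two_pi_pos.ne' hf
  have hu₀ : 0 < π / (n + 1) := by positivity
  have huπ : π / (n + 1) ≤ π := div_le_self pi_pos.le (by simp)
  have hφK : Continuous fun t => (f (x + t) + f (x - t) - 2 * f x)
      * ∑ k ∈ range (n + 1), a n k * dirichletKernel k t := by fun_prop
  have hnear := abs_integral_zero_to_mul_sum_dirichletKernel_le hbdd x (a n) n hu₀.le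
  have hfar := abs_integral_to_pi_mul_sum_dirichletKernel_le hbdd x (a n) n hβ hu₀ huπ
  simp only [abs_of_nonneg (hnn _), hrow] at hnear hfar
  rw [matrixTransform_sub_eq_integral hf hper a n hrow x,
    ← intervalIntegral.integral_add_adjacent_intervals (hφK.intervalIntegrable 0 (π / (n + 1)))
      (hφK.intervalIntegrable _ π),
    abs_mul, abs_of_pos (by positivity)]
  calc _ ≤ 1 / π * (2 * modulusOfContinuity f (π / (n + 1)) * ((n + 1) * 1) * (π / (n + 1))
          + 2 * π ^ 2 * (a n n + weightedVariation β (a n) n)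
            * ∫ t in π / (n + 1)..π, modulusOfContinuity f t / t ^ 2) := by
        gcongr
        exact (abs_add_le _ _).trans (add_le_add hnear hfar)
    _ = _ := by field_simp

theorem matrix_mean_approx_HBV_mixed_general
    (f : ℝ → ℝ) (hf : Continuous f) (hper : Function.Periodic f (2 * Real.pi))
    (β : ℝ) (hβ : 0 ≤ β)
    (a : ℕ → ℕ → ℝ)
    (hnn : ∀ n k : ℕ, 0 ≤ a n k)
    (hrow : ∀ n : ℕ, ∑ k ∈ Finset.range (n + 1), a n k = 1)
    (C : ℝ)
    (hA : ∀ n m : ℕ, m ≤ n →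
      ∑ k ∈ Finset.range m,
        ((k : ℝ) + 1) ^ β * |a n k / ((k : ℝ) + 1) ^ β - a n (k + 1) / ((k : ℝ) + 2) ^ β|
        ≤ C * a n m)
    (H : ℝ → ℝ) (hHnn : ∀ u : ℝ, 0 < u → u ≤ Real.pi → 0 ≤ H u)
    (C₁ : ℝ)
    (hint₁ : ∀ u : ℝ, 0 < u → u ≤ Real.pi →
      ∫ t in u..Real.pi, modulusOfContinuity f t / t ^ 2 ≤ C₁ * H u)
    :
    ∃ C' : ℝ, 0 < C' ∧ ∀ (n : ℕ) (x : ℝ),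
      |matrixTransform a f n x - f x| ≤ C' * (modulusOfContinuity f (Real.pi / (n + 1)) + a n n * H (Real.pi / (n + 1))) := by
  refine ⟨2 + 2 * π * (1 + |C|) * |C₁|, by positivity, fun n x => ?_⟩
  have hbdd := hper.isBounded_of_continuous two_pi_pos.ne' hf
  set u := π / (n + 1)
  have hu₀ : 0 < u := by positivity
  have huπ : u ≤ π := div_le_self pi_pos.le (by simp)
  have hω := modulusOfContinuity_nonneg hbdd hu₀.le
  have ha := hnn n n
  have hH := hHnn u hu₀ huπ
  have hV : a n n + weightedVariation β (a n) n ≤ (1 + |C|) * a n n := by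
    have : weightedVariation β (a n) n ≤ C * a n n := hA n n le_rfl
    nlinarith [le_abs_self C]
  have hI : 0 ≤ ∫ t in u..π, modulusOfContinuity f t / t ^ 2 :=
    intervalIntegral.integral_nonneg huπ fun t ht =>
      div_nonneg (modulusOfContinuity_nonneg hbdd (hu₀.le.trans ht.1)) (sq_nonneg t)
  have hIH : ∫ t in u..π, modulusOfContinuity f t / t ^ 2 ≤ |C₁| * H u :=
    (hint₁ u hu₀ huπ).trans (mul_le_mul_of_nonneg_right (le_abs_self C₁) hH)
  calc |matrixTransform a f n x - f x|
      ≤ 2 * modulusOfContinuity f u + 2 * π * (a n n + weightedVariation β (a n) n)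
          * ∫ t in u..π, modulusOfContinuity f t / t ^ 2 :=
        abs_matrixTransform_sub_le hf hper hβ a n (hnn n) (hrow n) x
    _ ≤ 2 * modulusOfContinuity f u + 2 * π * ((1 + |C|) * a n n) * (|C₁| * H u) := by
        gcongr
    _ ≤ _ := by
        have : 0 ≤ 2 * π * (1 + |C|) * |C₁| := by positivity
        nlinarith [mul_nonneg ha hH, mul_nonneg this hω]

theorem matrix_mean_approx_HBV_mixed
    (f : ℝ → ℝ) (hf : Continuous f) (hper : Function.Periodic f (2 * Real.pi))
    (β : ℝ) (hβ : 0 ≤ β)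
    (a : ℕ → ℕ → ℝ) (htri : ∀ n k : ℕ, n < k → a n k = 0)
    (hnn : ∀ n k : ℕ, 0 ≤ a n k)
    (hrow : ∀ n : ℕ, ∑ k ∈ Finset.range (n + 1), a n k = 1)
    (C : ℝ) (hC : 0 < C)
    (hA : ∀ n m : ℕ, m ≤ n →
      ∑ k ∈ Finset.range m,
        ((k : ℝ) + 1) ^ β * |a n k / ((k : ℝ) + 1) ^ β - a n (k + 1) / ((k : ℝ) + 2) ^ β|
        ≤ C * a n m)
    (H : ℝ → ℝ) (hHnn : ∀ u : ℝ, 0 < u → u ≤ Real.pi → 0 ≤ H u)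
    (C₁ : ℝ) (hC₁ : 0 < C₁)
    (hint₁ : ∀ u : ℝ, 0 < u → u ≤ Real.pi →
      ∫ t in u..Real.pi, modulusOfContinuity f t / t ^ 2 ≤ C₁ * H u)
    :
    ∃ C' : ℝ, 0 < C' ∧ ∀ (n : ℕ) (x : ℝ),
      |matrixTransform a f n x - f x| ≤ C' * (modulusOfContinuity f (Real.pi / (n + 1)) + a n n * H (Real.pi / (n + 1))) :=
  matrix_mean_approx_HBV_mixed_general f hf hper β hβ a hnn hrow C hA H hHnn C₁ hint₁
end FourierPartialSum
end

section
/- Let β ≥ 0 and let A = (a_{n,k}) be a lower triangular infinite matrix of nonnegative real numbers (a_{n,k} = 0 for k > n). Suppose there is a constant C, independent of n and m, such that Σ_{k=0}^{m-1} (k+1)^β |a_{n,k}/(k+1)^β − a_{n,k+1}/(k+2)^β| ≤ C·a_{n,m} for all 0 ≤ m ≤ n. Then there is a constant C', independent of n and l, such that a_{n,l} ≤ C'·a_{n,n} for all 0 ≤ l ≤ n. -/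
/-!
Put `f k = a n k / (k + 1) ^ β`. Telescoping `f l - f n` over `l ≤ k < n` and using that the
weights `(k + 1) ^ β` increase, `(l + 1) ^ β (f l - f n)` is at most the weighted variation
`∑ (k + 1) ^ β |f k - f (k + 1)| ≤ C a n n`. Since also `(l + 1) ^ β f n ≤ (n + 1) ^ β f n = a n n`,
this gives `a n l ≤ (1 + C) a n n`.
-/

open Real Finset

lemma mul_sub_le_sum_mul_abs_sub {f w : ℕ → ℝ} (hw : Monotone w) (hw_nonneg : ∀ k, 0 ≤ w k)
    {l n : ℕ} (hln : l ≤ n) :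
    w l * (f l - f n) ≤ ∑ k ∈ range n, w k * |f k - f (k + 1)| := by
  have htelescope : f l - f n = ∑ k ∈ Ico l n, (f k - f (k + 1)) := by
    rw [sum_Ico_eq_sub _ hln, sum_range_sub', sum_range_sub']
    ring
  calc w l * (f l - f n) = ∑ k ∈ Ico l n, w l * (f k - f (k + 1)) := by
        rw [htelescope, mul_sum]
    _ ≤ ∑ k ∈ Ico l n, w k * |f k - f (k + 1)| := by
        refine sum_le_sum fun k hk => ?_
        have hlk : w l ≤ w k := hw (mem_Ico.mp hk).1
        calc w l * (f k - f (k + 1)) ≤ w l * |f k - f (k + 1)| :=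
              mul_le_mul_of_nonneg_left (le_abs_self _) (hw_nonneg l)
          _ ≤ w k * |f k - f (k + 1)| := mul_le_mul_of_nonneg_right hlk (abs_nonneg _)
    _ ≤ ∑ k ∈ range n, w k * |f k - f (k + 1)| := by
        refine sum_le_sum_of_subset_of_nonneg ?_ fun k _ _ => ?_
        · exact fun k hk => mem_range.mpr (mem_Ico.mp hk).2
        · exact mul_nonneg (hw_nonneg k) (abs_nonneg _)

lemma le_one_add_mul_of_sum_mul_abs_sub_div_le {g w : ℕ → ℝ} (hw : Monotone w)
    (hw_pos : ∀ k, 0 < w k) {n l : ℕ} (hln : l ≤ n) (hgn : 0 ≤ g n) {C : ℝ}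
    (hvar : ∑ k ∈ range n, w k * |g k / w k - g (k + 1) / w (k + 1)| ≤ C * g n) :
    g l ≤ (1 + C) * g n := by
  have hw_nonneg : ∀ k, 0 ≤ w k := fun k => (hw_pos k).le
  have hvariation : w l * (g l / w l - g n / w n) ≤ C * g n :=
    (mul_sub_le_sum_mul_abs_sub (f := fun k => g k / w k) hw hw_nonneg hln).trans hvar
  have hlast : w l * (g n / w n) ≤ g n := by
    calc w l * (g n / w n) ≤ w n * (g n / w n) :=
          mul_le_mul_of_nonneg_right (hw hln) (div_nonneg hgn (hw_nonneg n))
      _ = g n := mul_div_cancel₀ _ (hw_pos n).ne'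
  rw [mul_sub, mul_div_cancel₀ _ (hw_pos l).ne'] at hvariation
  linarith

lemma monotone_natCast_add_one_rpow {β : ℝ} (hβ : 0 ≤ β) :
    Monotone fun k : ℕ => ((k : ℝ) + 1) ^ β :=
  fun _ _ hkm => rpow_le_rpow (by positivity) (by gcongr) hβ

theorem HBV_row_dominated_by_last_general
    (β : ℝ) (hβ : 0 ≤ β)
    (a : ℕ → ℕ → ℝ)
    (hnn : ∀ n k : ℕ, 0 ≤ a n k)
    (C : ℝ) (hC : 0 < C)
    (hA : ∀ n m : ℕ, m ≤ n →
      ∑ k ∈ Finset.range m,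
        ((k : ℝ) + 1) ^ β * |a n k / ((k : ℝ) + 1) ^ β - a n (k + 1) / ((k : ℝ) + 2) ^ β|
        ≤ C * a n m)
    :
    ∃ C' : ℝ, 0 < C' ∧ ∀ n l : ℕ, l ≤ n → a n l ≤ C' * a n n := by
  refine ⟨1 + C, by linarith, fun n l hln => ?_⟩
  refine le_one_add_mul_of_sum_mul_abs_sub_div_le (monotone_natCast_add_one_rpow hβ)
    (fun k => by positivity) hln (hnn n n) ?_
  convert hA n n le_rfl using 6
  push_cast
  ring_nf

theorem HBV_row_dominated_by_last
    (β : ℝ) (hβ : 0 ≤ β)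
    (a : ℕ → ℕ → ℝ) (htri : ∀ n k : ℕ, n < k → a n k = 0)
    (hnn : ∀ n k : ℕ, 0 ≤ a n k)
    (C : ℝ) (hC : 0 < C)
    (hA : ∀ n m : ℕ, m ≤ n →
      ∑ k ∈ Finset.range m,
        ((k : ℝ) + 1) ^ β * |a n k / ((k : ℝ) + 1) ^ β - a n (k + 1) / ((k : ℝ) + 2) ^ β|
        ≤ C * a n m)
    :
    ∃ C' : ℝ, 0 < C' ∧ ∀ n l : ℕ, l ≤ n → a n l ≤ C' * a n n :=
  HBV_row_dominated_by_last_general β hβ a hnn C hC hA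
end

section
/- Let β ≥ 0 and let A = (a_{n,k}) be a lower triangular infinite matrix of nonnegative real numbers (a_{n,k} = 0 for k > n). Suppose there is a constant C, independent of n and m, such that Σ_{k=m}^{∞} (k+1)^β |a_{n,k}/(k+1)^β − a_{n,k+1}/(k+2)^β| ≤ C·a_{n,m} for all 0 ≤ m ≤ n. Then there is a constant C', independent of n, k, m, such that a_{n,m} ≤ C'·a_{n,k} whenever 0 ≤ k ≤ m ≤ n. -/
open Real MeasureTheory

theorem RBV_row_quasi_monotone
    (β : ℝ) (hβ : 0 ≤ β)
    (a : ℕ → ℕ → ℝ) (htri : ∀ n k : ℕ, n < k → a n k = 0)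
    (hnn : ∀ n k : ℕ, 0 ≤ a n k)
    (C : ℝ) (hC : 0 < C)
    (hA : ∀ n m : ℕ, m ≤ n →
      ∑' k : ℕ,
        ((m : ℝ) + (k : ℝ) + 1) ^ β *
          |a n (m + k) / ((m : ℝ) + (k : ℝ) + 1) ^ β -
            a n (m + k + 1) / ((m : ℝ) + (k : ℝ) + 2) ^ β|
        ≤ C * a n m)
    :
    ∃ C' : ℝ, 0 < C' ∧ ∀ n k m : ℕ, k ≤ m → m ≤ n → a n m ≤ C' * a n k := by
  refine ⟨C, hC, fun n k m hkm hmn => ?_⟩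
  have hkn : k ≤ n := hkm.trans hmn
  set b : ℕ → ℝ := fun j => a n j / ((j : ℝ) + 1) ^ β with hb
  set f : ℕ → ℝ := fun i => ((k : ℝ) + (i : ℝ) + 1) ^ β *
      |a n (k + i) / ((k : ℝ) + (i : ℝ) + 1) ^ β -
        a n (k + i + 1) / ((k : ℝ) + (i : ℝ) + 2) ^ β| with hf
  have hfb : ∀ i : ℕ, f i = ((k : ℝ) + (i : ℝ) + 1) ^ β * |b (k + i) - b (k + i + 1)| := by
    intro i
    simp only [hf, hb]
    push_cast
    ring_nf
  have hfnn : ∀ i, 0 ≤ f i := fun i =>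
    mul_nonneg (Real.rpow_nonneg (by positivity) _) (abs_nonneg _)
  have hfzero : ∀ i ∉ Finset.range (n + 1), f i = 0 := by
    intro i hi
    simp only [Finset.mem_range, not_lt] at hi
    have h1 : a n (k + i) = 0 := htri n _ (by omega)
    have h2 : a n (k + i + 1) = 0 := htri n _ (by omega)
    simp [hf, h1, h2]
  have hsum : Summable f := summable_of_ne_finset_zero (s := Finset.range (n + 1))
    (by intro i hi; exact hfzero i hi)
  have hwpos : ∀ x : ℝ, 0 < x → (0 : ℝ) < x ^ β := fun x hx => Real.rpow_pos_of_pos hx _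
  have hbn : b (n + 1) = 0 := by
    simp [hb, htri n (n + 1) (by omega)]
  set N := n + 1 - m with hN
  have htel : ∑ j ∈ Finset.range N, (b (m + j) - b (m + j + 1)) = b m := by
    have h := Finset.sum_range_sub' (fun j => b (m + j)) N
    have hmN : m + N = n + 1 := by omega
    calc ∑ j ∈ Finset.range N, (b (m + j) - b (m + j + 1))
        = ∑ j ∈ Finset.range N, (b (m + j) - b (m + (j + 1))) := by
          apply Finset.sum_congr rfl; intro j _; rw [Nat.add_assoc]
      _ = b (m + 0) - b (m + N) := h
      _ = b m := by rw [hmN, hbn]; simp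
  have key : ∀ j ∈ Finset.range N,
      ((m : ℝ) + 1) ^ β * (b (m + j) - b (m + j + 1)) ≤ f (m - k + j) := by
    intro j _
    have hcast : ((m - k + j : ℕ) : ℝ) = (m : ℝ) - (k : ℝ) + (j : ℝ) := by
      push_cast [Nat.cast_sub hkm]; ring
    have hidx : k + (m - k + j) = m + j := by omega
    have hidx1 : k + (m - k + j) + 1 = m + j + 1 := by omega
    have hw1 : ((m : ℝ) + 1) ^ β ≤ ((m : ℝ) + (j : ℝ) + 1) ^ β := by
      apply Real.rpow_le_rpow (by positivity) _ hβ
      have : (0 : ℝ) ≤ (j : ℝ) := Nat.cast_nonneg j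
      linarith
    have hfval : f (m - k + j) = ((m : ℝ) + (j : ℝ) + 1) ^ β * |b (m + j) - b (m + j + 1)| := by
      rw [hfb, hidx, hcast]
      ring_nf
    rw [hfval]
    calc ((m : ℝ) + 1) ^ β * (b (m + j) - b (m + j + 1))
        ≤ ((m : ℝ) + 1) ^ β * |b (m + j) - b (m + j + 1)| :=
          mul_le_mul_of_nonneg_left (le_abs_self _) (Real.rpow_nonneg (by positivity) _)
      _ ≤ ((m : ℝ) + (j : ℝ) + 1) ^ β * |b (m + j) - b (m + j + 1)| :=
          mul_le_mul_of_nonneg_right hw1 (abs_nonneg _)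
  have ham : a n m = ((m : ℝ) + 1) ^ β * b m := by
    rw [hb]
    field_simp
  calc a n m = ((m : ℝ) + 1) ^ β * ∑ j ∈ Finset.range N, (b (m + j) - b (m + j + 1)) := by
        rw [htel, ham]
    _ = ∑ j ∈ Finset.range N, ((m : ℝ) + 1) ^ β * (b (m + j) - b (m + j + 1)) := by
        rw [Finset.mul_sum]
    _ ≤ ∑ j ∈ Finset.range N, f (m - k + j) := Finset.sum_le_sum key
    _ = ∑ i ∈ Finset.Ico (m - k) (m - k + N), f i := by
        rw [Finset.sum_Ico_eq_sum_range]
        have h : m - k + N - (m - k) = N := by omega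
        rw [h]
    _ ≤ ∑' i, f i := Summable.sum_le_tsum _ (fun i _ => hfnn i) hsum
    _ ≤ C * a n k := hA n k hkn
end

section
/- Let β ≥ 0 and let A = (a_{n,k}) be a lower triangular infinite matrix of nonnegative real numbers (a_{n,k} = 0 for k > n). If there is a constant C, independent of n and m, such that Σ_{k=m}^{∞} (k+1)^β |a_{n,k}/(k+1)^β − a_{n,k+1}/(k+2)^β| ≤ C·a_{n,m} for all 0 ≤ m ≤ n, then for each fixed n the sequence c_k := (k+1)^{-β} a_{n,k} is of Rest Bounded Variation with a constant independent of n: there is K > 0, independent of n, such that Σ_{k=m}^{∞} |c_k − c_{k+1}| ≤ K·c_m for all 0 ≤ m ≤ n. -/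
open Real MeasureTheory

theorem cond_implies_RBVS
    (β : ℝ) (hβ : 0 ≤ β)
    (a : ℕ → ℕ → ℝ) (htri : ∀ n k : ℕ, n < k → a n k = 0)
    (hnn : ∀ n k : ℕ, 0 ≤ a n k)
    (C : ℝ) (hC : 0 < C)
    (hA : ∀ n m : ℕ, m ≤ n →
      ∑' k : ℕ,
        ((m : ℝ) + (k : ℝ) + 1) ^ β *
          |a n (m + k) / ((m : ℝ) + (k : ℝ) + 1) ^ β -
            a n (m + k + 1) / ((m : ℝ) + (k : ℝ) + 2) ^ β|
        ≤ C * a n m)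
    :
    ∃ K : ℝ, 0 < K ∧ ∀ n m : ℕ, m ≤ n →
      ∑' k : ℕ,
        |((m : ℝ) + (k : ℝ) + 1) ^ (-β) * a n (m + k) -
          ((m : ℝ) + (k : ℝ) + 2) ^ (-β) * a n (m + k + 1)|
      ≤ K * (((m : ℝ) + 1) ^ (-β) * a n m) := by
  refine ⟨C, hC, fun n m hmn => ?_⟩
  set f : ℕ → ℝ := fun k => |((m : ℝ) + (k : ℝ) + 1) ^ (-β) * a n (m + k) -
          ((m : ℝ) + (k : ℝ) + 2) ^ (-β) * a n (m + k + 1)| with hf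
  set g : ℕ → ℝ := fun k => ((m : ℝ) + (k : ℝ) + 1) ^ β *
          |a n (m + k) / ((m : ℝ) + (k : ℝ) + 1) ^ β -
            a n (m + k + 1) / ((m : ℝ) + (k : ℝ) + 2) ^ β| with hg
  have hm1 : (0:ℝ) < ((m:ℝ)+1) ^ β := Real.rpow_pos_of_pos (by positivity) β
  have hzero : ∀ k, n + 1 ≤ k → f k = 0 ∧ g k = 0 := by
    intro k hk
    have h1 : a n (m + k) = 0 := htri n _ (by omega)
    have h2 : a n (m + k + 1) = 0 := htri n _ (by omega)
    simp [hf, hg, h1, h2]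
  have hfs : Summable f := by
    refine summable_of_ne_finset_zero (s := Finset.range (n+1)) (fun k hk => ?_)
    exact (hzero k (by simp [Finset.mem_range] at hk; omega)).1
  have hgs : Summable g := by
    refine summable_of_ne_finset_zero (s := Finset.range (n+1)) (fun k hk => ?_)
    exact (hzero k (by simp [Finset.mem_range] at hk; omega)).2
  have key : ∀ k, f k ≤ g k / ((m:ℝ)+1) ^ β := by
    intro k
    have hx : (0:ℝ) < ((m:ℝ)+(k:ℝ)+1) ^ β := Real.rpow_pos_of_pos (by positivity) β
    have hy : (0:ℝ) < ((m:ℝ)+(k:ℝ)+2) ^ β := Real.rpow_pos_of_pos (by positivity) β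
    have hle : ((m:ℝ)+1) ^ β ≤ ((m:ℝ)+(k:ℝ)+1) ^ β := by
      apply Real.rpow_le_rpow (by positivity) (by push_cast; linarith [Nat.cast_nonneg (α := ℝ) k]) hβ
    have hfeq : f k = g k / ((m:ℝ)+(k:ℝ)+1) ^ β := by
      simp only [hf, hg]
      rw [Real.rpow_neg (by positivity), Real.rpow_neg (by positivity)]
      rw [mul_comm (((m:ℝ)+(k:ℝ)+1) ^ β) _, mul_div_assoc, div_self (ne_of_gt hx), mul_one]
      congr 1
      field_simp
    rw [hfeq]
    have hgk : 0 ≤ g k := by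
      simp only [hg]; positivity
    gcongr
  calc ∑' k, f k ≤ ∑' k, g k / ((m:ℝ)+1) ^ β :=
        Summable.tsum_le_tsum key hfs (hgs.div_const _)
    _ = (∑' k, g k) / ((m:ℝ)+1) ^ β := tsum_div_const
    _ ≤ (C * a n m) / ((m:ℝ)+1) ^ β := by gcongr; exact hA n m hmn
    _ = C * (((m : ℝ) + 1) ^ (-β) * a n m) := by
        rw [Real.rpow_neg (by positivity)]
        field_simp
end

section
/- Let f be a continuous 2π-periodic real-valued function with modulus of continuity ω and let A = (a_{n,k}) be a lower triangular infinite matrix of real numbers satisfying: (i) a_{n,k} ≥ 0 and Σ_{k=0}^{n} a_{n,k} = 1 for every n; (ii) a_{n,k} ≥ a_{n,k+1} for k = 0,1,...,n−1 and all n. Suppose H : (0,π] → [0,∞) is such that ∫_u^π t^{-2} ω(t) dt = O(H(u)) as u → 0+ and ∫_0^t H(u) du = O(t·H(t)) as t → 0+. Then ‖T_{n,A}(f) − f‖_∞ = O(a_{n,0}·H(a_{n,0})), with the implied constant independent of n. -/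
open Real MeasureTheory

/-!
With `L_n = ∑_k a_{n,k} D_k` (`D_k` the Dirichlet kernel) one has
`T_{n,A}(f;x) - f(x) = π⁻¹ ∫_{-π}^{π} (f(x+t) - f(x)) L_n(t) dt`. Since the row is nonincreasing,
Abel summation against the nonnegative Fejér sums `∑_{j ≤ k} D_j` gives `L_n ≥ 0`, and against the
partial sums of `sin((j + 1/2)t)`, which are at most `1 / sin(t/2)`, gives
`L_n(t) ≤ a_{n,0} π² / (2t²)`. Splitting `∫_0^π ω(t) L_n(t) dt` at `t = a_{n,0}` bounds the error
by `ω(a_{n,0}) + π a_{n,0} ∫_{a_{n,0}}^π ω(t)/t² dt`, and monotonicity of `ω` bounds `ω(a_{n,0})`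
by a multiple of the second term.
-/

namespace MatrixMeans

open Finset

noncomputable def dirichletKernel (k : ℕ) (t : ℝ) : ℝ :=
  1 / 2 + ∑ j ∈ Icc 1 k, cos (j * t)

@[fun_prop]
theorem continuous_dirichletKernel (k : ℕ) : Continuous (dirichletKernel k) := by
  unfold dirichletKernel
  fun_prop

theorem dirichletKernel_neg (k : ℕ) (t : ℝ) : dirichletKernel k (-t) = dirichletKernel k t := by
  simp only [dirichletKernel, mul_neg, cos_neg]

theorem dirichletKernel_periodic (k : ℕ) : Function.Periodic (dirichletKernel k) (2 * π) := by
  intro t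
  simp only [dirichletKernel, mul_add]
  congr 1
  refine sum_congr rfl fun j _ => ?_
  exact cos_add_nat_mul_two_pi _ j

theorem two_mul_sin_half_mul_dirichletKernel (k : ℕ) (t : ℝ) :
    2 * sin (t / 2) * dirichletKernel k t = sin ((k + 1 / 2) * t) := by
  induction k with
  | zero =>
    rw [dirichletKernel, Icc_eq_empty (by norm_num), sum_empty]
    ring_nf
  | succ k ih =>
    have hstep : sin ((k + 1 + 1 / 2) * t) - sin ((k + 1 / 2) * t) =
        2 * sin (t / 2) * cos ((k + 1) * t) := by
      rw [sin_sub_sin]; ring_nf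
    rw [dirichletKernel, sum_Icc_succ_top (by omega), ← add_assoc, ← dirichletKernel, mul_add,
      ih]
    push_cast
    linarith

theorem two_mul_sin_half_mul_sum_sin (m : ℕ) (t : ℝ) :
    2 * sin (t / 2) * ∑ j ∈ range (m + 1), sin ((j + 1 / 2) * t) = 1 - cos ((m + 1) * t) := by
  have htel : ∀ j : ℕ, 2 * sin (t / 2) * sin ((j + 1 / 2) * t) =
      cos ((j : ℕ) * t) - cos (((j + 1 : ℕ) : ℝ) * t) := by
    intro j
    rw [cos_sub_cos, show ((j : ℝ) * t + ((j + 1 : ℕ) : ℝ) * t) / 2 = (j + 1 / 2) * t by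
      push_cast; ring, show ((j : ℝ) * t - ((j + 1 : ℕ) : ℝ) * t) / 2 = -(t / 2) by
      push_cast; ring, sin_neg]
    ring
  rw [mul_sum, sum_congr rfl fun j _ => htel j, sum_range_sub']
  push_cast
  simp

theorem sum_dirichletKernel_nonneg (k : ℕ) (t : ℝ) :
    0 ≤ ∑ j ∈ range (k + 1), dirichletKernel j t := by
  rcases eq_or_ne (sin (t / 2)) 0 with hs | hs
  · obtain ⟨m, hm⟩ := sin_eq_zero_iff.mp hs
    have hcos : ∀ i : ℕ, cos (i * t) = 1 := fun i => by
      rw [show (i : ℝ) * t = ((i * m : ℤ) : ℝ) * (2 * π) by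
        push_cast; linear_combination (-2 * (i : ℝ)) * hm]
      exact cos_int_mul_two_pi _
    refine sum_nonneg fun j _ => ?_
    simp only [dirichletKernel, hcos, sum_const]
    positivity
  · have hsq : 0 < (2 * sin (t / 2)) ^ 2 := by positivity
    have hprod : (2 * sin (t / 2)) ^ 2 * ∑ j ∈ range (k + 1), dirichletKernel j t =
        1 - cos ((k + 1) * t) := by
      rw [← two_mul_sin_half_mul_sum_sin, mul_sum, mul_sum]
      refine sum_congr rfl fun j _ => ?_
      rw [← two_mul_sin_half_mul_dirichletKernel]
      ring
    have : 0 ≤ (2 * sin (t / 2)) ^ 2 * ∑ j ∈ range (k + 1), dirichletKernel j t := by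
      rw [hprod]; linarith [cos_le_one ((k + 1) * t)]
    exact nonneg_of_mul_nonneg_right this hsq

theorem integral_dirichletKernel (k : ℕ) : ∫ t in (0 : ℝ)..π, dirichletKernel k t = π / 2 := by
  have hcos : ∀ j ∈ Icc 1 k, ∫ t in (0 : ℝ)..π, cos (j * t) = 0 := by
    intro j hj
    have hj0 : (j : ℝ) ≠ 0 := by have := (mem_Icc.mp hj).1; positivity
    rw [intervalIntegral.integral_comp_mul_left (fun x => cos x) hj0]
    simp [integral_cos, sin_nat_mul_pi]
  unfold dirichletKernel
  rw [intervalIntegral.integral_add intervalIntegrable_const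
      (Continuous.intervalIntegrable (by fun_prop) _ _),
    intervalIntegral.integral_finsetSum fun j _ =>
      Continuous.intervalIntegrable (by fun_prop) _ _,
    sum_eq_zero hcos]
  simp only [intervalIntegral.integral_const, sub_zero, smul_eq_mul, add_zero]
  ring

theorem sum_range_succ_mul_le_of_antitone {b c : ℕ → ℝ} {n : ℕ} {M : ℝ}
    (hb : ∀ k < n, b (k + 1) ≤ b k) (hbn : 0 ≤ b n)
    (hc : ∀ k ≤ n, ∑ j ∈ range (k + 1), c j ≤ M) :
    ∑ k ∈ range (n + 1), b k * c k ≤ b 0 * M := by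
  have hparts := sum_range_by_parts b c (n + 1)
  simp only [smul_eq_mul, Nat.add_sub_cancel] at hparts
  have htail : -∑ k ∈ range n, (b (k + 1) - b k) * ∑ j ∈ range (k + 1), c j ≤
      (b 0 - b n) * M := by
    rw [← sum_neg_distrib, ← sum_range_sub' b n, sum_mul]
    refine sum_le_sum fun k hk => ?_
    rw [← neg_mul, neg_sub]
    have hk := mem_range.mp hk
    exact mul_le_mul_of_nonneg_left (hc k hk.le) (sub_nonneg.mpr (hb k hk))
  linarith [mul_le_mul_of_nonneg_left (hc n le_rfl) hbn]

theorem sum_range_succ_mul_nonneg_of_antitone {b c : ℕ → ℝ} {n : ℕ}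
    (hb : ∀ k < n, b (k + 1) ≤ b k) (hbn : 0 ≤ b n)
    (hc : ∀ k ≤ n, 0 ≤ ∑ j ∈ range (k + 1), c j) :
    0 ≤ ∑ k ∈ range (n + 1), b k * c k := by
  have := sum_range_succ_mul_le_of_antitone (c := fun k => -c k) (M := 0) hb hbn
    fun k hk => by simpa using hc k hk
  simpa using this

section RowKernel

variable {b : ℕ → ℝ} {n : ℕ}

theorem le_apply_zero_of_antitone (hb : ∀ k < n, b (k + 1) ≤ b k) : ∀ k ≤ n, b k ≤ b 0
  | 0, _ => le_rfl
  | k + 1, hk => (hb k hk).trans (le_apply_zero_of_antitone hb k (by omega))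

theorem apply_zero_pos_of_sum_eq_one (hb : ∀ k < n, b (k + 1) ≤ b k)
    (hsum : ∑ k ∈ range (n + 1), b k = 1) : 0 < b 0 := by
  have : ∑ k ∈ range (n + 1), b k ≤ (n + 1) * b 0 := by
    simpa using sum_le_sum fun k hk =>
      le_apply_zero_of_antitone hb k (mem_range_succ_iff.mp hk)
  by_contra! h
  nlinarith

noncomputable def rowKernel (b : ℕ → ℝ) (n : ℕ) (t : ℝ) : ℝ :=
  ∑ k ∈ range (n + 1), b k * dirichletKernel k t

variable (b n) in
@[fun_prop]
theorem continuous_rowKernel : Continuous (rowKernel b n) :=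
  continuous_finsetSum _ fun k _ => continuous_const.mul (continuous_dirichletKernel k)

variable (b n) in
theorem rowKernel_neg (t : ℝ) : rowKernel b n (-t) = rowKernel b n t := by
  simp only [rowKernel, dirichletKernel_neg]

theorem rowKernel_nonneg (hb : ∀ k < n, b (k + 1) ≤ b k) (hbn : 0 ≤ b n) (t : ℝ) :
    0 ≤ rowKernel b n t :=
  sum_range_succ_mul_nonneg_of_antitone hb hbn fun k _ => sum_dirichletKernel_nonneg k t

theorem rowKernel_le_div_sin_sq (hb : ∀ k < n, b (k + 1) ≤ b k) (hbn : 0 ≤ b n) {t : ℝ}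
    (hs : 0 < sin (t / 2)) : rowKernel b n t ≤ b 0 / (2 * sin (t / 2) ^ 2) := by
  have hpartial : ∀ k ≤ n, ∑ j ∈ range (k + 1), sin ((j + 1 / 2) * t) ≤ 1 / sin (t / 2) := by
    intro k _
    have := two_mul_sin_half_mul_sum_sin k t
    rw [le_div_iff₀ hs]
    nlinarith [neg_one_le_cos ((k + 1) * t)]
  have hsin : 2 * sin (t / 2) * rowKernel b n t =
      ∑ k ∈ range (n + 1), b k * sin ((k + 1 / 2) * t) := by
    rw [rowKernel, mul_sum]
    refine sum_congr rfl fun k _ => ?_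
    rw [← two_mul_sin_half_mul_dirichletKernel]
    ring
  have hbound := sum_range_succ_mul_le_of_antitone hb hbn hpartial
  rw [le_div_iff₀ (by positivity)]
  calc rowKernel b n t * (2 * sin (t / 2) ^ 2)
      = sin (t / 2) * (2 * sin (t / 2) * rowKernel b n t) := by ring
    _ ≤ sin (t / 2) * (b 0 * (1 / sin (t / 2))) := by rw [hsin]; gcongr
    _ = b 0 := by field_simp

theorem rowKernel_le (hb : ∀ k < n, b (k + 1) ≤ b k) (hbn : 0 ≤ b n) {t : ℝ} (ht : 0 < t)
    (htπ : t ≤ π) : rowKernel b n t ≤ b 0 * π ^ 2 / (2 * t ^ 2) := by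
  have hjordan : t / π ≤ sin (t / 2) := by
    have := mul_le_sin (x := t / 2) (by linarith) (by linarith)
    rwa [show 2 / π * (t / 2) = t / π by ring] at this
  have hb0 : 0 ≤ b 0 := hbn.trans (le_apply_zero_of_antitone hb n le_rfl)
  calc rowKernel b n t ≤ b 0 / (2 * sin (t / 2) ^ 2) :=
        rowKernel_le_div_sin_sq hb hbn ((by positivity : 0 < t / π).trans_le hjordan)
    _ ≤ b 0 / (2 * (t / π) ^ 2) := by gcongr
    _ = b 0 * π ^ 2 / (2 * t ^ 2) := by field_simp

theorem integral_rowKernel (hsum : ∑ k ∈ range (n + 1), b k = 1) :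
    ∫ t in (0 : ℝ)..π, rowKernel b n t = π / 2 := by
  simp only [rowKernel]
  rw [intervalIntegral.integral_finsetSum fun k _ =>
    ((continuous_dirichletKernel k).const_mul (b k)).intervalIntegrable _ _]
  simp only [intervalIntegral.integral_const_mul, integral_dirichletKernel, ← sum_mul, hsum,
    one_mul]

end RowKernel

section ModulusOfContinuity

variable {f : ℝ → ℝ} {M : ℝ}

variable (f) in
theorem modulusOfContinuity_nonneg (δ : ℝ) : 0 ≤ modulusOfContinuity f δ :=
  Real.sSup_nonneg fun _ ⟨_, _, _, hy⟩ => hy ▸ abs_nonneg _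

theorem bddAbove_modulusOfContinuity_set (hM : ∀ y, |f y| ≤ M) (δ : ℝ) :
    BddAbove {y : ℝ | ∃ x t : ℝ, |t| ≤ δ ∧ y = |f (x + t) - f x|} := by
  refine ⟨2 * M, ?_⟩
  rintro _ ⟨x, t, -, rfl⟩
  linarith [abs_sub (f (x + t)) (f x), hM (x + t), hM x]

theorem abs_sub_le_modulusOfContinuity (hM : ∀ y, |f y| ≤ M) (x t : ℝ) :
    |f (x + t) - f x| ≤ modulusOfContinuity f |t| :=
  le_csSup (bddAbove_modulusOfContinuity_set hM _) ⟨x, t, le_rfl, rfl⟩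

theorem monotone_modulusOfContinuity (hM : ∀ y, |f y| ≤ M) :
    Monotone (modulusOfContinuity f) := fun _ δ hle =>
  Real.sSup_le (fun _ ⟨x, t, ht, hy⟩ =>
    le_csSup (bddAbove_modulusOfContinuity_set hM δ) ⟨x, t, ht.trans hle, hy⟩)
    (modulusOfContinuity_nonneg f δ)

end ModulusOfContinuity

theorem _root_.MonotoneOn.intervalIntegrable_div_sq {ω : ℝ → ℝ} {u v : ℝ}
    (hω : MonotoneOn ω (Set.uIcc u v)) (hzero : (0 : ℝ) ∉ Set.uIcc u v) :
    IntervalIntegrable (fun t => ω t / t ^ 2) MeasureTheory.volume u v := by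
  simp only [div_eq_mul_inv]
  exact hω.intervalIntegrable.mul_continuousOn
    ((continuousOn_pow 2).inv₀ fun t ht h => hzero (pow_eq_zero_iff two_ne_zero |>.mp h ▸ ht))

theorem _root_.MonotoneOn.mul_sub_le_mul_integral_div_sq {ω : ℝ → ℝ} {u v : ℝ}
    (hω : MonotoneOn ω (Set.Icc u v)) (hu : 0 < u) (huv : u ≤ v) :
    ω u * (v - u) ≤ u * v * ∫ t in u..v, ω t / t ^ 2 := by
  have hzero : (0 : ℝ) ∉ Set.uIcc u v := by
    rw [Set.uIcc_of_le huv]; exact fun h => hu.not_ge h.1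
  have hint : ∫ t in u..v, (t ^ 2)⁻¹ = u⁻¹ - v⁻¹ := by
    have := integral_zpow (a := u) (b := v) (n := -2) (Or.inr ⟨by norm_num, hzero⟩)
    simp only [zpow_neg, zpow_ofNat] at this
    rw [this]
    norm_num [zpow_neg_one, div_neg, neg_sub]
  rw [← Set.uIcc_of_le huv] at hω
  have hmono : ∫ t in u..v, ω u / t ^ 2 ≤ ∫ t in u..v, ω t / t ^ 2 := by
    refine intervalIntegral.integral_mono_on huv
      (monotoneOn_const.intervalIntegrable_div_sq hzero) (hω.intervalIntegrable_div_sq hzero)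
      fun t ht => ?_
    rw [← Set.uIcc_of_le huv] at ht
    gcongr
    exact hω Set.left_mem_uIcc ht (Set.uIcc_of_le huv ▸ ht).1
  simp only [div_eq_mul_inv (ω u), intervalIntegral.integral_const_mul, hint] at hmono
  have hv : 0 < v := hu.trans_le huv
  calc ω u * (v - u) = u * v * (ω u * (u⁻¹ - v⁻¹)) := by field_simp
    _ ≤ u * v * ∫ t in u..v, ω t / t ^ 2 := by gcongr

theorem integral_symmetric_eq_integral_comp_neg_add {g : ℝ → ℝ} (hg : Continuous g) (c : ℝ) :
    ∫ t in -c..c, g t = ∫ t in (0 : ℝ)..c, (g (-t) + g t) := by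
  rw [← intervalIntegral.integral_add_adjacent_intervals (b := 0) (hg.intervalIntegrable _ _)
      (hg.intervalIntegrable _ _),
    intervalIntegral.integral_add
      ((show Continuous fun t => g (-t) from hg.comp continuous_neg).intervalIntegrable _ _)
      (hg.intervalIntegrable _ _),
    intervalIntegral.integral_comp_neg, neg_zero]

theorem _root_.Function.Periodic.integral_comp_add_left_eq {h : ℝ → ℝ}
    (hh : Function.Periodic h (2 * π)) (x : ℝ) :
    ∫ t in -π..π, h (x + t) = ∫ t in -π..π, h t := by
  rw [intervalIntegral.integral_comp_add_left]
  convert hh.intervalIntegral_add_eq (x + -π) (-π) using 2 <;> ring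

section Representation

variable {f : ℝ → ℝ}

theorem fourierPartialSum_eq_integral_mul_dirichletKernel_sub (hf : Continuous f) (k : ℕ)
    (x : ℝ) :
    fourierPartialSum f k x = π⁻¹ * ∫ t in -π..π, f t * dirichletKernel k (t - x) := by
  have hexpand : ∀ t, f t * dirichletKernel k (t - x) = 2⁻¹ * f t +
      ∑ j ∈ Icc 1 k,
        (cos (j * x) * (f t * cos (j * t)) + sin (j * x) * (f t * sin (j * t))) := by
    intro t
    rw [dirichletKernel, mul_add, mul_sum]
    congr 1
    · ring
    · refine sum_congr rfl fun j _ => ?_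
      rw [mul_sub, cos_sub]
      ring
  simp only [hexpand]
  rw [intervalIntegral.integral_add (Continuous.intervalIntegrable (by fun_prop) _ _)
      (Continuous.intervalIntegrable (by fun_prop) _ _),
    intervalIntegral.integral_finsetSum fun j _ =>
      Continuous.intervalIntegrable (by fun_prop) _ _]
  simp only [intervalIntegral.integral_const_mul]
  rw [fourierPartialSum, mul_add, mul_sum]
  congr 1
  · field_simp
  · refine sum_congr rfl fun j _ => ?_
    rw [intervalIntegral.integral_add (Continuous.intervalIntegrable (by fun_prop) _ _)
      (Continuous.intervalIntegrable (by fun_prop) _ _), intervalIntegral.integral_const_mul,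
      intervalIntegral.integral_const_mul]
    ring

theorem fourierPartialSum_eq_integral_mul_dirichletKernel (hf : Continuous f)
    (hper : Function.Periodic f (2 * π)) (k : ℕ) (x : ℝ) :
    fourierPartialSum f k x = π⁻¹ * ∫ t in -π..π, f (x + t) * dirichletKernel k t := by
  have hshift : Function.Periodic (fun t => f t * dirichletKernel k (t - x)) (2 * π) :=
    hper.mul ((dirichletKernel_periodic k).sub_const x)
  rw [fourierPartialSum_eq_integral_mul_dirichletKernel_sub hf,
    ← hshift.integral_comp_add_left_eq x]
  simp only [add_sub_cancel_left]

theorem integral_rowKernel_symmetric {b : ℕ → ℝ} {n : ℕ}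
    (hsum : ∑ k ∈ range (n + 1), b k = 1) :
    ∫ t in -π..π, rowKernel b n t = π := by
  rw [integral_symmetric_eq_integral_comp_neg_add (continuous_rowKernel b n)]
  simp only [rowKernel_neg, ← two_mul]
  rw [intervalIntegral.integral_const_mul, integral_rowKernel hsum]
  ring

theorem matrixTransform_sub_eq_integral (hf : Continuous f) (hper : Function.Periodic f (2 * π))
    {a : ℕ → ℕ → ℝ} {n : ℕ} (hrow : ∑ k ∈ range (n + 1), a n k = 1) (x : ℝ) :
    matrixTransform a f n x - f x =
      π⁻¹ * ∫ t in -π..π, (f (x + t) - f x) * rowKernel (a n) n t := by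
  have htransform :
      ∫ t in -π..π, f (x + t) * rowKernel (a n) n t = π * matrixTransform a f n x := by
    simp only [rowKernel, matrixTransform, mul_sum]
    rw [intervalIntegral.integral_finsetSum fun k _ =>
      Continuous.intervalIntegrable (by fun_prop) _ _]
    refine sum_congr rfl fun k _ => ?_
    simp only [fourierPartialSum_eq_integral_mul_dirichletKernel hf hper, mul_left_comm (f _)]
    rw [intervalIntegral.integral_const_mul]
    field_simp
  simp only [sub_mul]
  rw [intervalIntegral.integral_sub (Continuous.intervalIntegrable (by fun_prop) _ _)
    (Continuous.intervalIntegrable (by fun_prop) _ _), intervalIntegral.integral_const_mul,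
    htransform, integral_rowKernel_symmetric hrow]
  field_simp

end Representation

theorem abs_matrixTransform_sub_le {f : ℝ → ℝ} (hf : Continuous f)
    (hper : Function.Periodic f (2 * π)) {M : ℝ} (hM : ∀ y, |f y| ≤ M) {a : ℕ → ℕ → ℝ} {n : ℕ}
    (hb : ∀ k < n, a n (k + 1) ≤ a n k) (hbn : 0 ≤ a n n)
    (hrow : ∑ k ∈ range (n + 1), a n k = 1) (x : ℝ) :
    |matrixTransform a f n x - f x| ≤
      2 / π * ∫ t in (0 : ℝ)..π, modulusOfContinuity f t * rowKernel (a n) n t := by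
  set ω := modulusOfContinuity f
  set L := rowKernel (a n) n
  have hpoint : ∀ s, |(f (x + s) - f x) * L s| ≤ ω |s| * L s := fun s => by
    rw [abs_mul, abs_of_nonneg (rowKernel_nonneg hb hbn s)]
    exact mul_le_mul_of_nonneg_right (abs_sub_le_modulusOfContinuity hM x s)
      (rowKernel_nonneg hb hbn s)
  have hfold : ∀ t ∈ Set.Icc 0 π,
      |(f (x + -t) - f x) * L (-t) + (f (x + t) - f x) * L t| ≤ 2 * (ω t * L t) := by
    intro t ht
    have h₁ := hpoint (-t)
    have h₂ := hpoint t
    rw [abs_neg, show L (-t) = L t from rowKernel_neg _ _ t, abs_of_nonneg ht.1] at h₁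
    rw [show L (-t) = L t from rowKernel_neg _ _ t]
    rw [abs_of_nonneg ht.1] at h₂
    linarith [abs_add_le ((f (x + -t) - f x) * L t) ((f (x + t) - f x) * L t)]
  have hint : IntervalIntegrable (fun t => 2 * (ω t * L t)) volume 0 π :=
    ((monotone_modulusOfContinuity hM).intervalIntegrable.mul_continuousOn
      (continuous_rowKernel _ n).continuousOn).const_mul 2
  rw [matrixTransform_sub_eq_integral hf hper hrow,
    integral_symmetric_eq_integral_comp_neg_add (by fun_prop), abs_mul,
    abs_of_pos (inv_pos.mpr pi_pos)]
  calc _ ≤ π⁻¹ * ∫ t in (0 : ℝ)..π, 2 * (ω t * L t) := by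
        gcongr
        exact (intervalIntegral.abs_integral_le_integral_abs pi_pos.le).trans
          (intervalIntegral.integral_mono_on pi_pos.le
            (Continuous.intervalIntegrable (by fun_prop) _ _) hint hfold)
    _ = 2 / π * ∫ t in (0 : ℝ)..π, ω t * L t := by
        rw [intervalIntegral.integral_const_mul]
        ring

theorem integral_mul_rowKernel_le {ω : ℝ → ℝ} (hω : Monotone ω) (hω0 : ∀ t, 0 ≤ ω t)
    {b : ℕ → ℝ} {n : ℕ} (hb : ∀ k < n, b (k + 1) ≤ b k) (hbn : 0 ≤ b n)
    (hsum : ∑ k ∈ range (n + 1), b k = 1) (hbπ : b 0 ≤ π) :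
    ∫ t in (0 : ℝ)..π, ω t * rowKernel b n t ≤
      ω (b 0) * (π / 2) + b 0 * π ^ 2 / 2 * ∫ t in b 0..π, ω t / t ^ 2 := by
  have hb0 := apply_zero_pos_of_sum_eq_one hb hsum
  have hL := rowKernel_nonneg hb hbn
  have hint : ∀ u v : ℝ, IntervalIntegrable (fun t => ω t * rowKernel b n t) volume u v :=
    fun u v => hω.intervalIntegrable.mul_continuousOn (continuous_rowKernel b n).continuousOn
  have hnear : ∫ t in (0 : ℝ)..b 0, ω t * rowKernel b n t ≤ ω (b 0) * (π / 2) := calc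
    _ ≤ ∫ t in (0 : ℝ)..b 0, ω (b 0) * rowKernel b n t :=
        intervalIntegral.integral_mono_on hb0.le (hint _ _)
          (Continuous.intervalIntegrable (by fun_prop) _ _)
          fun t ht => mul_le_mul_of_nonneg_right (hω ht.2) (hL t)
    _ = ω (b 0) * ∫ t in (0 : ℝ)..b 0, rowKernel b n t :=
        intervalIntegral.integral_const_mul _ _
    _ ≤ ω (b 0) * ∫ t in (0 : ℝ)..π, rowKernel b n t := by
        gcongr
        · exact hω0 _
        · exact intervalIntegral.integral_mono_interval le_rfl hb0.le hbπ
            (Filter.Eventually.of_forall hL) (Continuous.intervalIntegrable (by fun_prop) _ _)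
    _ = ω (b 0) * (π / 2) := by rw [integral_rowKernel hsum]
  have htail : ∫ t in b 0..π, ω t * rowKernel b n t ≤
      b 0 * π ^ 2 / 2 * ∫ t in b 0..π, ω t / t ^ 2 := by
    have hzero : (0 : ℝ) ∉ Set.uIcc (b 0) π := by
      rw [Set.uIcc_of_le hbπ]; exact fun h => hb0.not_ge h.1
    rw [← intervalIntegral.integral_const_mul]
    refine intervalIntegral.integral_mono_on hbπ (hint _ _)
      (((hω.monotoneOn _).intervalIntegrable_div_sq hzero).const_mul _) fun t ht => ?_
    have ht0 : 0 < t := hb0.trans_le ht.1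
    calc ω t * rowKernel b n t ≤ ω t * (b 0 * π ^ 2 / (2 * t ^ 2)) :=
          mul_le_mul_of_nonneg_left (rowKernel_le hb hbn ht0 ht.2) (hω0 t)
      _ = b 0 * π ^ 2 / 2 * (ω t / t ^ 2) := by field_simp
  rw [← intervalIntegral.integral_add_adjacent_intervals (hint 0 (b 0)) (hint _ _)]
  exact add_le_add hnear htail

end MatrixMeans

open MatrixMeans in
theorem chandra_monotone_decreasing_an0_general
    (f : ℝ → ℝ) (hf : Continuous f) (hper : Function.Periodic f (2 * Real.pi))
    (a : ℕ → ℕ → ℝ)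
    (hnn : ∀ n k : ℕ, 0 ≤ a n k)
    (hrow : ∀ n : ℕ, ∑ k ∈ Finset.range (n + 1), a n k = 1)
    (hmono : ∀ n : ℕ, ∀ k : ℕ, k < n → a n (k + 1) ≤ a n k)
    (H : ℝ → ℝ)
    (C₁ : ℝ) (hC₁ : 0 < C₁)
    (hint₁ : ∀ u : ℝ, 0 < u → u ≤ Real.pi →
      ∫ t in u..Real.pi, modulusOfContinuity f t / t ^ 2 ≤ C₁ * H u)
    :
    ∃ C' : ℝ, 0 < C' ∧ ∀ (n : ℕ) (x : ℝ),
      |matrixTransform a f n x - f x| ≤ C' * (a n 0 * H (a n 0)) := by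
  obtain ⟨M, hM⟩ := (hper.isBounded_of_continuous two_pi_pos.ne' hf).exists_norm_le
  have hfM : ∀ y, |f y| ≤ M := fun y => hM _ ⟨y, rfl⟩
  have hω := monotone_modulusOfContinuity hfM
  refine ⟨3 * π / 2 * C₁, by positivity, fun n x => ?_⟩
  set α := a n 0
  set J := ∫ t in α..π, modulusOfContinuity f t / t ^ 2
  have hα : 0 < α := apply_zero_pos_of_sum_eq_one (hmono n) (hrow n)
  have hα1 : α ≤ 1 := hrow n ▸ Finset.single_le_sum (fun k _ => hnn n k)
    (Finset.mem_range.mpr n.succ_pos)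
  have hαπ : α ≤ π := hα1.trans (by linarith [pi_gt_three])
  have hωα : modulusOfContinuity f α * 2 ≤ α * π * J := calc
    _ ≤ modulusOfContinuity f α * (π - α) := by
        gcongr
        · exact modulusOfContinuity_nonneg f α
        · linarith [pi_gt_three]
    _ ≤ α * π * J := (hω.monotoneOn _).mul_sub_le_mul_integral_div_sq hα hαπ
  calc |matrixTransform a f n x - f x|
      ≤ 2 / π * ∫ t in (0 : ℝ)..π, modulusOfContinuity f t * rowKernel (a n) n t :=
        abs_matrixTransform_sub_le hf hper hfM (hmono n) (hnn n n) (hrow n) x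
    _ ≤ 2 / π * (modulusOfContinuity f α * (π / 2) + α * π ^ 2 / 2 * J) := by
        gcongr
        exact integral_mul_rowKernel_le hω (modulusOfContinuity_nonneg f) (hmono n) (hnn n n)
          (hrow n) hαπ
    _ = modulusOfContinuity f α + α * π * J := by field_simp
    _ ≤ 3 * π / 2 * α * J := by linarith
    _ ≤ 3 * π / 2 * α * (C₁ * H α) := by gcongr; exact hint₁ α hα hαπ
    _ = 3 * π / 2 * C₁ * (α * H α) := by ring

theorem chandra_monotone_decreasing_an0
    (f : ℝ → ℝ) (hf : Continuous f) (hper : Function.Periodic f (2 * Real.pi))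
    (a : ℕ → ℕ → ℝ) (htri : ∀ n k : ℕ, n < k → a n k = 0)
    (hnn : ∀ n k : ℕ, 0 ≤ a n k)
    (hrow : ∀ n : ℕ, ∑ k ∈ Finset.range (n + 1), a n k = 1)
    (hmono : ∀ n : ℕ, ∀ k : ℕ, k < n → a n (k + 1) ≤ a n k)
    (H : ℝ → ℝ) (hHnn : ∀ u : ℝ, 0 < u → u ≤ Real.pi → 0 ≤ H u)
    (C₁ : ℝ) (hC₁ : 0 < C₁)
    (hint₁ : ∀ u : ℝ, 0 < u → u ≤ Real.pi →
      ∫ t in u..Real.pi, modulusOfContinuity f t / t ^ 2 ≤ C₁ * H u)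
    (C₂ : ℝ) (hC₂ : 0 < C₂)
    (hint₂ : ∀ t : ℝ, 0 < t → t ≤ Real.pi →
      ∫ u in (0 : ℝ)..t, H u ≤ C₂ * (t * H t))
    :
    ∃ C' : ℝ, 0 < C' ∧ ∀ (n : ℕ) (x : ℝ),
      |matrixTransform a f n x - f x| ≤ C' * (a n 0 * H (a n 0)) :=
  chandra_monotone_decreasing_an0_general f hf hper a hnn hrow hmono H C₁ hC₁ hint₁
end
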